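/- arXiv:math/0408170 — 9 statements merged into one kernel-verified Lean document; each statement's English description precedes it below -/
import Mathlib

section
/- Let K be a field with ultrametric valuation v and φ ∈ K[x] a polynomial of degree d ≥ 2 with good reduction at v. If α lies in an algebraic extension K' of K and v'(α) < 0 for some extension v' of v to K', then α is not preperiodic for φ (i.e., the forward orbit {φ^∘n(α) : n ≥ 0} is infinite). -/
open Polynomial

/-! If `v'(β) < 0`, the leading term `a_d β^d` of `φ(β)` has valuation `d • v'(β)`, strictly
smaller than that of every other term since `v(a_i) ≥ 0`; so `v'(φ(β)) = d • v'(β) < v'(β)`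
once `d ≥ 2`. Along the orbit of `α` the valuation therefore strictly decreases, and the orbit
cannot repeat. -/

theorem Set.infinite_range_iterate_of_mapsTo_of_lt {X Y : Type*} [Preorder Y]
    (f : X → X) (g : X → Y) (s : Set X) (hmaps : Set.MapsTo f s s)
    (hlt : ∀ x ∈ s, g (f x) < g x) {a : X} (ha : a ∈ s) :
    (Set.range fun n : ℕ => f^[n] a).Infinite := by
  have hmem : ∀ n, f^[n] a ∈ s := fun n => hmaps.iterate n ha
  have hanti : StrictAnti fun n => g (f^[n] a) := strictAnti_nat_of_succ_lt fun n => by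
    simpa only [Function.iterate_succ_apply'] using hlt _ (hmem n)
  exact Set.infinite_range_of_injective fun m n h => hanti.injective (by simp only [h])

section GoodReduction

variable {K K' Γ : Type*} [CommRing K] [CommRing K'] [Algebra K K']
  [AddCommGroup Γ] [LinearOrder Γ] [IsOrderedAddMonoid Γ]
  {v : AddValuation K (WithTop Γ)} {v' : AddValuation K' (WithTop Γ)}

theorem AddValuation.map_aeval_of_neg (hext : ∀ x : K, v' (algebraMap K K' x) = v x)
    {φ : K[X]} (hint : ∀ i, 0 ≤ v (φ.coeff i)) (hlead : v φ.leadingCoeff = 0)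
    {β : K'} {γ : Γ} (hβ : v' β = γ) (hγ : γ < 0) :
    v' (aeval β φ) = (φ.natDegree • γ : Γ) := by
  set d := φ.natDegree
  have hterm : ∀ i, v' (φ.coeff i • β ^ i) = v (φ.coeff i) + (i • γ : Γ) := by
    intro i
    rw [Algebra.smul_def, v'.map_mul, hext, v'.map_pow, hβ, WithTop.coe_nsmul]
  have hleading : v' (φ.coeff d • β ^ d) = (d • γ : Γ) := by
    rw [hterm, coeff_natDegree, hlead, zero_add]
  have hlower : ((d • γ : Γ) : WithTop Γ) < v' (∑ i ∈ Finset.range d, φ.coeff i • β ^ i) := by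
    refine v'.map_lt_sum WithTop.coe_ne_top fun i hi => ?_
    have hdi : d • γ < i • γ := nsmul_lt_nsmul_left (M := Γᵒᵈ) hγ (Finset.mem_range.mp hi)
    rw [hterm]
    exact (WithTop.coe_lt_coe.mpr hdi).trans_le (le_add_of_nonneg_left (hint i))
  rw [aeval_eq_sum_range, Finset.sum_range_succ, ← hleading]
  exact v'.map_add_eq_of_lt_right (hleading ▸ hlower)

theorem AddValuation.map_aeval_lt_of_neg (hext : ∀ x : K, v' (algebraMap K K' x) = v x)
    {φ : K[X]} (hdeg : 2 ≤ φ.natDegree) (hint : ∀ i, 0 ≤ v (φ.coeff i))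
    (hlead : v φ.leadingCoeff = 0) {β : K'} (hβ : v' β < 0) :
    v' (aeval β φ) < v' β := by
  obtain ⟨γ, hγβ⟩ := WithTop.ne_top_iff_exists.mp (hβ.trans_le le_top).ne
  have hγ : γ < 0 := WithTop.coe_lt_coe.mp (hγβ ▸ hβ)
  rw [AddValuation.map_aeval_of_neg hext hint hlead hγβ.symm hγ, ← hγβ, WithTop.coe_lt_coe]
  calc φ.natDegree • γ ≤ 2 • γ := nsmul_le_nsmul_left_of_nonpos hγ.le hdeg
    _ < γ := by rw [two_nsmul]; exact add_lt_of_neg_left γ hγ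

end GoodReduction

theorem stmt_6_general {K K' : Type*} [Field K] [Field K'] [Algebra K K']
    {Γ : Type*} [AddCommGroup Γ] [LinearOrder Γ] [IsOrderedAddMonoid Γ]
    (v : AddValuation K (WithTop Γ)) (v' : AddValuation K' (WithTop Γ))
    (hext : ∀ x : K, v' (algebraMap K K' x) = v x)
    (φ : Polynomial K) (hdeg : 2 ≤ φ.natDegree)
    (hint : ∀ i, 0 ≤ v (φ.coeff i)) (hlead : v φ.leadingCoeff = 0)
    (α : K') (hα : v' α < 0) :
    (Set.range fun n : ℕ => (fun x : K' => Polynomial.aeval x φ)^[n] α).Infinite := by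
  have hlt : ∀ β : K', v' β < 0 → v' (aeval β φ) < v' β :=
    fun β hβ => AddValuation.map_aeval_lt_of_neg hext hdeg hint hlead hβ
  exact Set.infinite_range_iterate_of_mapsTo_of_lt _ v' {β | v' β < 0}
    (fun β hβ => (hlt β hβ).trans hβ) hlt hα

/-- Let `K` be a field with an (additive, ultrametric) valuation `v` and
`φ ∈ K[x]` a polynomial of degree `d ≥ 2` with good reduction at `v` (coefficients of
nonnegative valuation, leading coefficient of valuation `0`).  If `α` lies in an algebraic
extension `K'` of `K` and `v'(α) < 0` for some extension `v'` of `v` to `K'`, then `α` is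
not preperiodic for `φ`: the forward orbit `{φ^∘n(α) : n ≥ 0}` is infinite. -/
theorem stmt_6 {K K' : Type*} [Field K] [Field K'] [Algebra K K']
    (halg : Algebra.IsAlgebraic K K')
    {Γ : Type*} [AddCommGroup Γ] [LinearOrder Γ] [IsOrderedAddMonoid Γ]
    (v : AddValuation K (WithTop Γ)) (v' : AddValuation K' (WithTop Γ))
    (hext : ∀ x : K, v' (algebraMap K K' x) = v x)
    (φ : Polynomial K) (hdeg : 2 ≤ φ.natDegree)
    (hint : ∀ i, 0 ≤ v (φ.coeff i)) (hlead : v φ.leadingCoeff = 0)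
    (α : K') (hα : v' α < 0) :
    (Set.range fun n : ℕ => (fun x : K' => Polynomial.aeval x φ)^[n] α).Infinite :=
  stmt_6_general v v' hext φ hdeg hint hlead α hα
end

section
/- Let K be a field of characteristic 0 with an ultrametric valuation v whose residue field has characteristic p > 0. Suppose φ ∈ K[x] has degree d divisible by p, has good reduction at v, and is post-critically finite (every critical point of φ is preperiodic). Then every coefficient of φ' has positive valuation, i.e., the image of φ' in the residue field polynomial ring is identically 0. -/
open Polynomial

section Aux

variable {K : Type*} [Field K] (v : AddValuation K (WithTop ℤ))

/-- The valuation subring of `v` as a `Subring`. -/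
def vRing : Subring K where
  carrier := {x | 0 ≤ v x}
  zero_mem' := by simp
  one_mem' := by simp
  add_mem' {a b} ha hb := le_trans (le_min ha hb) (v.map_add a b)
  mul_mem' {a b} ha hb := by
    simp only [Set.mem_setOf_eq, v.map_mul] at *
    calc (0 : WithTop ℤ) = 0 + 0 := by simp
    _ ≤ v a + v b := add_le_add ha hb
  neg_mem' {a} ha := by simpa only [Set.mem_setOf_eq, v.map_neg] using ha

lemma mem_vRing {x : K} : x ∈ vRing v ↔ 0 ≤ v x := Iff.rfl

lemma nsmul_nonneg' {t : WithTop ℤ} (ht : 0 ≤ t) (n : ℕ) : 0 ≤ n • t := by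
  induction n with
  | zero => simp
  | succ k ih =>
    rw [succ_nsmul]
    calc (0 : WithTop ℤ) = 0 + 0 := by simp
    _ ≤ k • t + t := add_le_add ih ht

lemma nsmul_pos' {t : WithTop ℤ} (ht : 0 < t) {n : ℕ} (hn : n ≠ 0) : 0 < n • t := by
  obtain ⟨k, rfl⟩ := Nat.exists_eq_succ_of_ne_zero hn
  rw [succ_nsmul]
  calc (0 : WithTop ℤ) < t := ht
  _ ≤ k • t + t := le_add_of_nonneg_left (nsmul_nonneg' (le_of_lt ht) k)

/-- The valuation subring is integrally closed. -/
lemma mem_vRing_of_isIntegral {x : K} (hx : IsIntegral (vRing v) x) : x ∈ vRing v := by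
  by_contra hxm
  rw [mem_vRing] at hxm
  have hvx : v x < 0 := lt_of_not_ge hxm
  have hx0 : x ≠ 0 := by
    rintro rfl
    simp only [AddValuation.map_zero] at hvx
    exact absurd hvx (by simp)
  have hxi : 0 < v x⁻¹ := by
    rw [v.map_inv]
    have hne : v x ≠ ⊤ := ne_top_of_lt hvx
    lift v x to ℤ using hne with m hm
    have hm0 : m < 0 := by exact_mod_cast hvx
    exact_mod_cast neg_pos.mpr hm0
  obtain ⟨q, hq, hev⟩ := hx
  set n := q.natDegree with hn
  have hn1 : 1 ≤ n := by
    by_contra h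
    push_neg at h
    interval_cases n
    · have hq1 : q = 1 := hq.natDegree_eq_zero.mp hn.symm
      rw [hq1] at hev
      simp at hev
  have hev' : (∑ i ∈ Finset.range (n + 1), (algebraMap (vRing v) K (q.coeff i)) * x ^ i) = 0 := by
    have h1 : Polynomial.aeval x q = 0 := hev
    rw [Polynomial.aeval_eq_sum_range] at h1
    simpa only [Algebra.smul_def] using h1
  have key : (1 : K) + ∑ i ∈ Finset.range n, (algebraMap (vRing v) K (q.coeff i)) * x⁻¹ ^ (n - i) = 0 := by
    have h2 := congrArg (· * x⁻¹ ^ n) hev'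
    simp only [Finset.sum_mul, zero_mul] at h2
    rw [Finset.sum_range_succ] at h2
    have hlast : (algebraMap (vRing v) K (q.coeff n)) * x ^ n * x⁻¹ ^ n = 1 := by
      have hc1 : q.coeff n = 1 := hq
      rw [hc1, map_one, one_mul, inv_pow, mul_inv_cancel₀ (pow_ne_zero n hx0)]
    rw [hlast] at h2
    rw [add_comm, ← h2]
    congr 1
    refine Finset.sum_congr rfl fun i hi => ?_
    rw [Finset.mem_range] at hi
    rw [mul_assoc]
    congr 1
    have hsplit : x⁻¹ ^ n = x⁻¹ ^ i * x⁻¹ ^ (n - i) := by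
      rw [← pow_add]
      congr 1
      omega
    rw [hsplit, ← mul_assoc, ← mul_pow, mul_inv_cancel₀ hx0, one_pow, one_mul]
  have hsum : 0 < v (∑ i ∈ Finset.range n, (algebraMap (vRing v) K (q.coeff i)) * x⁻¹ ^ (n - i)) := by
    refine v.map_lt_sum (by simp) fun i hi => ?_
    rw [Finset.mem_range] at hi
    rw [v.map_mul, v.map_pow]
    have h1 : 0 ≤ v (algebraMap (vRing v) K (q.coeff i)) := (q.coeff i).2
    have h2 : 0 < (n - i) • v x⁻¹ := nsmul_pos' hxi (by omega)
    calc (0 : WithTop ℤ) < (n - i) • v x⁻¹ := h2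
    _ ≤ v ((algebraMap (vRing v) K) (q.coeff i)) + (n - i) • v x⁻¹ := le_add_of_nonneg_left h1
  have h1 : (∑ i ∈ Finset.range n, (algebraMap (vRing v) K (q.coeff i)) * x⁻¹ ^ (n - i)) = -1 := by
    linear_combination key
  rw [h1] at hsum
  simp at hsum

end Aux

section Coeffs

variable {L : Type*} [Field L] (T : Subring L)

lemma coeff_X_sub_C_mem (c : L) (hc : c ∈ T) (i : ℕ) : (X - C c).coeff i ∈ T := by
  rw [Polynomial.coeff_sub, Polynomial.coeff_X, Polynomial.coeff_C]
  split_ifs <;> simp_all [T.one_mem, T.zero_mem, T.neg_mem]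

lemma coeff_multiset_prod_mem (s : Multiset L) (hs : ∀ c ∈ s, c ∈ T) (i : ℕ) :
    ((s.map fun c => X - C c).prod).coeff i ∈ T := by
  induction s using Multiset.induction_on generalizing i with
  | empty =>
    simp only [Multiset.map_zero, Multiset.prod_zero, Polynomial.coeff_one]
    split_ifs <;> simp [T.one_mem, T.zero_mem]
  | cons c s ih =>
    simp only [Multiset.map_cons, Multiset.prod_cons]
    rw [Polynomial.coeff_mul]
    refine T.sum_mem fun ab hab => T.mul_mem ?_ ?_
    · exact coeff_X_sub_C_mem T c (hs c (Multiset.mem_cons_self c s)) _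
    · exact ih (fun x hx => hs x (Multiset.mem_cons_of_mem hx)) _

lemma coeffs_subset {p : L[X]} (h : ∀ i, p.coeff i ∈ T) : ↑p.coeffs ⊆ (T : Set L) := by
  intro c hc
  rw [Finset.mem_coe, Polynomial.mem_coeffs_iff] at hc
  obtain ⟨k, _, rfl⟩ := hc
  exact h k

lemma comp_coeff_mem {p q : L[X]} (hp : ∀ i, p.coeff i ∈ T) (hq : ∀ i, q.coeff i ∈ T) (i : ℕ) :
    (p.comp q).coeff i ∈ T := by
  have hpc : (p.toSubring T (coeffs_subset T hp)).map T.subtype = p := Polynomial.map_toSubring _ _ _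
  have hqc : (q.toSubring T (coeffs_subset T hq)).map T.subtype = q := Polynomial.map_toSubring _ _ _
  rw [← hpc, ← hqc, ← Polynomial.map_comp, Polynomial.coeff_map]
  exact (((p.toSubring T (coeffs_subset T hp)).comp (q.toSubring T (coeffs_subset T hq))).coeff i).2

end Coeffs

section Iterate

variable {K : Type*} [Field K]

/-- `n`-fold composition of a polynomial with itself. -/
noncomputable def iterPoly (φ : K[X]) : ℕ → K[X]
  | 0 => X
  | n + 1 => (iterPoly φ n).comp φ

@[simp] lemma iterPoly_zero (φ : K[X]) : iterPoly φ 0 = X := rfl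

@[simp] lemma iterPoly_succ (φ : K[X]) (n : ℕ) :
    iterPoly φ (n + 1) = (iterPoly φ n).comp φ := rfl

lemma aeval_iterPoly {L : Type*} [Field L] [Algebra K L] (φ : K[X]) (c : L) (n : ℕ) :
    Polynomial.aeval c (iterPoly φ n) = (fun x : L => Polynomial.aeval x φ)^[n] c := by
  induction n generalizing c with
  | zero => simp
  | succ k ih =>
    rw [iterPoly_succ, Polynomial.aeval_comp, ih, Function.iterate_succ_apply]

lemma natDegree_iterPoly (φ : K[X]) (n : ℕ) :
    (iterPoly φ n).natDegree = φ.natDegree ^ n := by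
  induction n with
  | zero => simp
  | succ k ih => rw [iterPoly_succ, Polynomial.natDegree_comp, ih, pow_succ]

lemma v_leadingCoeff_iterPoly (v : AddValuation K (WithTop ℤ)) {φ : K[X]}
    (hφ : φ.natDegree ≠ 0) (hlead : v φ.leadingCoeff = 0) (n : ℕ) :
    v (iterPoly φ n).leadingCoeff = 0 := by
  induction n with
  | zero => simp
  | succ k ih =>
    rw [iterPoly_succ, Polynomial.leadingCoeff_comp hφ, v.map_mul, v.map_pow, ih, hlead]
    simp

lemma coeff_iterPoly_mem (v : AddValuation K (WithTop ℤ)) {φ : K[X]}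
    (hint : ∀ i, φ.coeff i ∈ vRing v) (n i : ℕ) :
    (iterPoly φ n).coeff i ∈ vRing v := by
  induction n generalizing i with
  | zero =>
    rw [iterPoly_zero, Polynomial.coeff_X]
    split_ifs <;> simp [Subring.one_mem, Subring.zero_mem]
  | succ k ih => exact comp_coeff_mem _ (fun j => ih j) hint i

end Iterate

section Crit

variable {K : Type*} [Field K] (v : AddValuation K (WithTop ℤ))

/-- A point of a field extension with finite forward orbit under a polynomial of degree `≥ 2`
with `v`-integral coefficients and `v`-unit leading coefficient is integral over the
valuation subring. -/
lemma crit_integral {φ : K[X]} (hdeg2 : 2 ≤ φ.natDegree)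
    (hint : ∀ i, φ.coeff i ∈ vRing v) (hlead : v φ.leadingCoeff = 0)
    {L : Type*} [Field L] [Algebra K L] (c : L)
    (hfin : (Set.range fun n : ℕ => (fun x : L => Polynomial.aeval x φ)^[n] c).Finite) :
    IsIntegral (vRing v) c := by
  set f : ℕ → L := fun n => (fun x : L => Polynomial.aeval x φ)^[n] c with hf
  have hninj : ¬ Function.Injective f := fun h => (Set.infinite_range_of_injective h) hfin
  rw [Function.not_injective_iff] at hninj
  obtain ⟨a, b, hne, hab⟩ := hninj
  wlog h : b < a generalizing a b
  · exact this b a hne.symm hab.symm (by omega)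
  set P : K[X] := iterPoly φ a - iterPoly φ b with hP
  have hd2 : 1 < φ.natDegree := hdeg2
  have hlt : (iterPoly φ b).natDegree < (iterPoly φ a).natDegree := by
    rw [natDegree_iterPoly, natDegree_iterPoly]
    exact pow_lt_pow_right₀ hd2 h
  have hPdeg : P.natDegree = (iterPoly φ a).natDegree :=
    Polynomial.natDegree_sub_eq_left_of_natDegree_lt hlt
  have hPlead : P.leadingCoeff = (iterPoly φ a).leadingCoeff := by
    rw [Polynomial.leadingCoeff, Polynomial.leadingCoeff, hPdeg, hP, Polynomial.coeff_sub,
      Polynomial.coeff_eq_zero_of_natDegree_lt hlt, sub_zero]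
  have hvP : v P.leadingCoeff = 0 := by
    rw [hPlead]
    exact v_leadingCoeff_iterPoly v (by omega) hlead a
  have hP0 : P ≠ 0 := by
    intro h0
    have h1 := hPdeg
    rw [h0, Polynomial.natDegree_zero, natDegree_iterPoly] at h1
    exact (pow_ne_zero a (by omega : φ.natDegree ≠ 0)) h1.symm
  set χ : K[X] := P * C P.leadingCoeff⁻¹ with hχ
  have hmon : χ.Monic := Polynomial.monic_mul_leadingCoeff_inv hP0
  have hvinv : v P.leadingCoeff⁻¹ = 0 := by rw [v.map_inv, hvP, neg_zero]
  have hχmem : ∀ i, χ.coeff i ∈ vRing v := by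
    intro i
    rw [hχ, Polynomial.coeff_mul_C]
    refine (vRing v).mul_mem ?_ ?_
    · rw [hP, Polynomial.coeff_sub]
      exact sub_mem (coeff_iterPoly_mem v hint a i) (coeff_iterPoly_mem v hint b i)
    · exact le_of_eq hvinv.symm
  have haev : Polynomial.aeval c χ = 0 := by
    have h1 : Polynomial.aeval c (iterPoly φ a) = f a := aeval_iterPoly φ c a
    have h2 : Polynomial.aeval c (iterPoly φ b) = f b := aeval_iterPoly φ c b
    rw [hχ, map_mul, hP, map_sub, h1, h2, hne, sub_self, zero_mul]
  refine ⟨χ.toSubring (vRing v) (coeffs_subset _ hχmem),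
    (Polynomial.monic_toSubring _ _ _).mpr hmon, ?_⟩
  have hmap : (χ.toSubring (vRing v) (coeffs_subset _ hχmem)).map ((vRing v).subtype) = χ :=
    Polynomial.map_toSubring _ _ _
  have : Polynomial.aeval c (χ.toSubring (vRing v) (coeffs_subset _ hχmem)) = 0 := by
    rw [← Polynomial.aeval_map_algebraMap K c, show (algebraMap (vRing v) K) = (vRing v).subtype
      from rfl, hmap, haev]
  exact this

end Crit

/-- Let `K` be a field of characteristic `0` with an (additive,
ultrametric) valuation `v` whose residue field has characteristic `p > 0` (expressed by
`p` prime and `v(p) > 0`).  Suppose `φ ∈ K[x]` has degree `d` divisible by `p`, has good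
reduction at `v`, and is post-critically finite (every critical point of `φ` in an
algebraic closure is preperiodic).  Then every coefficient of `φ'` has positive valuation,
i.e. the image of `φ'` in the residue-field polynomial ring is identically `0`. -/
theorem stmt_7 {K : Type*} [Field K] [CharZero K]
    (v : AddValuation K (WithTop ℤ))
    (p : ℕ) (hp : p.Prime) (hvp : 0 < v (p : K))
    (φ : Polynomial K) (hdeg : 1 ≤ φ.natDegree) (hpd : p ∣ φ.natDegree)
    (hint : ∀ i, 0 ≤ v (φ.coeff i)) (hlead : v φ.leadingCoeff = 0)
    (hpcf : ∀ r : AlgebraicClosure K,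
      Polynomial.aeval r (Polynomial.derivative φ) = 0 →
        (Set.range fun n : ℕ =>
          (fun x : AlgebraicClosure K => Polynomial.aeval x φ)^[n] r).Finite) :
    ∀ i, 0 < v ((Polynomial.derivative φ).coeff i) := by
  intro i
  set d := φ.natDegree with hd
  have hd0 : d ≠ 0 := by omega
  have hd2 : 2 ≤ d := le_trans hp.two_le (Nat.le_of_dvd (by omega) hpd)
  have hφ0 : φ ≠ 0 := fun h => hd0 (by rw [hd, h, Polynomial.natDegree_zero])
  have ha0 : φ.leadingCoeff ≠ 0 := Polynomial.leadingCoeff_ne_zero.mpr hφ0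
  set pd := Polynomial.derivative φ with hpdd
  have hcoeffd : pd.coeff (d - 1) = φ.coeff d * (d : K) := by
    have e1 : d - 1 + 1 = d := by omega
    have e2 : ((d - 1 : ℕ) : K) + 1 = (d : K) := by exact_mod_cast congrArg (Nat.cast : ℕ → K) e1
    rw [hpdd, Polynomial.coeff_derivative, e1, e2]
  have hvd : 0 < v (d : K) := by
    obtain ⟨k, hk⟩ := hpd
    have hdk : (d : K) = (p : K) * (k : K) := by exact_mod_cast congrArg (Nat.cast : ℕ → K) hk
    rw [hdk, v.map_mul]
    have hvk : 0 ≤ v (k : K) := natCast_mem (vRing v) k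
    calc (0 : WithTop ℤ) < v (p : K) := hvp
    _ ≤ v (p : K) + v (k : K) := le_add_of_nonneg_right hvk
  have hcd : φ.coeff d = φ.leadingCoeff := rfl
  have he0 : φ.coeff d * (d : K) ≠ 0 :=
    mul_ne_zero (hcd ▸ ha0) (Nat.cast_ne_zero.mpr hd0)
  have hpd0 : pd ≠ 0 := by
    intro h0
    rw [h0, Polynomial.coeff_zero] at hcoeffd
    exact he0 hcoeffd.symm
  have hpddeg : pd.natDegree = d - 1 := by
    refine le_antisymm (Polynomial.natDegree_derivative_le φ) ?_
    exact Polynomial.le_natDegree_of_ne_zero (hcoeffd ▸ he0)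
  have hlead_pd : pd.leadingCoeff = φ.coeff d * (d : K) := by
    rw [Polynomial.leadingCoeff, hpddeg, hcoeffd]
  have hve : 0 < v pd.leadingCoeff := by
    rw [hlead_pd, v.map_mul]
    have hva : v (φ.coeff d) = 0 := by rw [hcd, hlead]
    rw [hva, zero_add]
    exact hvd
  have hlc0 : pd.leadingCoeff ≠ 0 := Polynomial.leadingCoeff_ne_zero.mpr hpd0
  -- now work in the algebraic closure
  set L := AlgebraicClosure K
  set f := algebraMap K L with hfdef
  have hsp : (pd.map f).Splits :=
    IsAlgClosed.splits (pd.map f)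
  have heq : pd.map f =
      C ((pd.map f).leadingCoeff) * (((pd.map f).roots).map fun a => X - C a).prod :=
    hsp.eq_prod_roots
  have hroots : ∀ c ∈ (pd.map f).roots, IsIntegral (vRing v) c := by
    intro c hc
    have hc0 : Polynomial.aeval c pd = 0 := by
      have hr := Polynomial.isRoot_of_mem_roots hc
      rwa [Polynomial.IsRoot, Polynomial.eval_map, ← Polynomial.aeval_def] at hr
    exact crit_integral v hd2 (fun j => hint j) hlead c (hpcf c hc0)
  set M := (((pd.map f).roots).map fun a => X - C a).prod with hM
  have hTi : IsIntegral (vRing v) (M.coeff i) :=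
    coeff_multiset_prod_mem (integralClosure (vRing v) L).toSubring (pd.map f).roots
      (fun c hc => hroots c hc) i
  have hco : f (pd.coeff i) = f pd.leadingCoeff * M.coeff i := by
    have h1 : f (pd.coeff i) = (pd.map f).coeff i := (Polynomial.coeff_map f i).symm
    rw [h1]
    conv_lhs => rw [heq]
    rw [Polynomial.coeff_C_mul, Polynomial.leadingCoeff_map]
  have hfl : f pd.leadingCoeff ≠ 0 := by
    simpa using (map_ne_zero_iff f (algebraMap K L).injective).mpr hlc0
  set s : K := pd.coeff i / pd.leadingCoeff with hs
  have hfs : f s = M.coeff i := by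
    rw [hs, map_div₀, hco, mul_div_cancel_left₀ _ hfl]
  have hsi : IsIntegral (vRing v) s :=
    (isIntegral_algebraMap_iff (algebraMap K L).injective).mp (hfs ▸ hTi)
  have hsmem : (0 : WithTop ℤ) ≤ v s := mem_vRing_of_isIntegral v hsi
  have hcoeq : pd.coeff i = pd.leadingCoeff * s := by
    rw [hs, mul_comm, div_mul_cancel₀ _ hlc0]
  rw [hcoeq, v.map_mul]
  calc (0 : WithTop ℤ) < v pd.leadingCoeff := hve
  _ ≤ v pd.leadingCoeff + v s := le_add_of_nonneg_right hsmem
end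

section
/- Let K be a number field with ring of integers O_K, v a valuation of K of residue characteristic p, and φ ∈ K[x] a post-critically finite polynomial of degree d divisible by p with good reduction at v. Then for any t_0 ∈ O_K and any n ≥ 1, v(disc(φ^∘n(x) − t_0)) ≥ n·d^n·v(p). -/
/-!
Write `G = φ^∘n - t₀`, `D = d^n`, and `ψₖ = φ' ∘ φ^∘k`. Up to factors of valuation zero,
`disc G = ∏_{G(r)=0} G'(r)`, and `G' = ∏_{k<n} ψₖ`. For each `k`, the symmetry of the resultant
gives `∑_{G(r)=0} w(ψₖ(r)) = D·w(lc ψₖ) + ∑_{ψₖ(s)=0} w(G(s))`. Here `w(lc ψₖ) = w(d) ≥ v(p)`,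
and `G(s)` is integral: `φ^∘k(s)` is a critical point of `φ`, so its orbit is finite, and an orbit
is finite only if it starts at an integral point, since `w(φ(x)) = d·w(x)` whenever `w(x) < 0`.
Summing over `k < n` gives `n·D·v(p)`.
-/

open Polynomial

/-- The discriminant of a polynomial `p` over a field `F`, computed in a fixed algebraic
closure `Ω` of `F` via the classical formula
`disc p = (-1)^(d(d-1)/2) · lc(p)^(d-2) · ∏_{p(r)=0} p'(r)`,
the product being taken over the roots of `p` in `Ω` with multiplicity. -/
noncomputable def polyDisc {F Ω : Type*} [Field F] [Field Ω] [Algebra F Ω]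
    [IsAlgClosed Ω] (p : Polynomial F) : Ω :=
  (-1) ^ (p.natDegree * (p.natDegree - 1) / 2)
    * (algebraMap F Ω p.leadingCoeff) ^ ((p.natDegree : ℤ) - 2)
    * ((p.map (algebraMap F Ω)).roots.map
        (fun r => (Polynomial.derivative (p.map (algebraMap F Ω))).eval r)).prod

theorem strictAnti_nsmul_of_neg {Γ : Type*} [AddCommGroup Γ] [PartialOrder Γ]
    [IsOrderedAddMonoid Γ] {γ : Γ} (hγ : γ < 0) : StrictAnti fun k : ℕ => k • γ :=
  fun i j hij => by simpa using nsmul_lt_nsmul_left (neg_pos.2 hγ) hij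

namespace Polynomial

variable {R S : Type*} [CommSemiring R] [CommSemiring S]

theorem map_iterate_comp (f : R →+* S) (p q : R[X]) (n : ℕ) :
    (p.comp^[n] q).map f = (p.map f).comp^[n] (q.map f) := by
  induction n with
  | zero => rfl
  | succ n ih => simp only [Function.iterate_succ_apply', map_comp, ih]

theorem derivative_iterate_comp_X (p : R[X]) (n : ℕ) :
    derivative (p.comp^[n] X) = ∏ k ∈ Finset.range n, (derivative p).comp (p.comp^[k] X) := by
  induction n with
  | zero => simp
  | succ n ih => rw [Function.iterate_succ_apply', derivative_comp, ih, Finset.prod_range_succ]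

def IsPostcriticallyFinite (p : R[X]) : Prop :=
  ∀ c, (derivative p).IsRoot c → (Set.range fun m : ℕ => (fun x => p.eval x)^[m] c).Finite

structure HasGoodReduction {A Γ₀ : Type*} [CommRing A] [LinearOrderedAddCommMonoidWithTop Γ₀]
    (w : AddValuation A Γ₀) (p : A[X]) : Prop where
  coeff_nonneg : ∀ i, 0 ≤ w (p.coeff i)
  leadingCoeff_eq_zero : w p.leadingCoeff = 0

end Polynomial

namespace AddValuation

variable {R Γ₀ : Type*} [CommRing R] [LinearOrderedAddCommMonoidWithTop Γ₀]
  (w : AddValuation R Γ₀)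

theorem map_natCast_nonneg (m : ℕ) : 0 ≤ w m := by
  induction m with
  | zero => simp
  | succ m ih => exact (Nat.cast_succ (R := R) m).symm ▸ w.map_le_add ih w.map_one.ge

theorem map_intCast_nonneg (m : ℤ) : 0 ≤ w m := by
  obtain ⟨k, rfl | rfl⟩ := Int.eq_nat_or_neg m <;> simp [w.map_natCast_nonneg]

theorem le_map_natCast_of_dvd {p m : ℕ} (h : p ∣ m) : w p ≤ w m := by
  obtain ⟨k, rfl⟩ := h
  rw [Nat.cast_mul, w.map_mul]
  exact le_add_of_nonneg_right (w.map_natCast_nonneg k)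

theorem map_multiset_prod (s : Multiset R) : w s.prod = (s.map w).sum := by
  induction s using Multiset.induction with
  | empty => simp
  | cons a s ih => simp [w.map_mul, ih]

theorem map_prod {ι : Type*} (s : Finset ι) (f : ι → R) :
    w (∏ i ∈ s, f i) = ∑ i ∈ s, w (f i) := by
  rw [Finset.prod_eq_multiset_prod, w.map_multiset_prod, Multiset.map_map,
    Finset.sum_eq_multiset_sum]
  rfl

theorem map_zpow_eq_zero {K Γ : Type*} [Field K] [LinearOrderedAddCommGroupWithTop Γ]
    {v : AddValuation K Γ} {x : K} (hx : v x = 0) (z : ℤ) : v (x ^ z) = 0 := by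
  cases z with
  | ofNat k => rw [Int.ofNat_eq_natCast, zpow_natCast, v.map_pow, hx, nsmul_zero]
  | negSucc k => rw [zpow_negSucc, v.map_inv, v.map_pow, hx, nsmul_zero, neg_zero]

theorem map_eval_nonneg {p : R[X]} (hp : ∀ i, 0 ≤ w (p.coeff i)) {x : R} (hx : 0 ≤ w x) :
    0 ≤ w (p.eval x) := by
  rw [eval_eq_sum_range]
  refine w.map_le_sum fun i _ => ?_
  rw [w.map_mul, w.map_pow]
  exact add_nonneg (hp i) (nsmul_nonneg hx i)

theorem map_eval_iterate_nonneg {p : R[X]} (hp : ∀ i, 0 ≤ w (p.coeff i)) {x : R} (hx : 0 ≤ w x)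
    (m : ℕ) : 0 ≤ w ((fun y => p.eval y)^[m] x) := by
  induction m with
  | zero => exact hx
  | succ m ih => exact Function.iterate_succ_apply' _ m x ▸ w.map_eval_nonneg hp ih

variable [IsDomain R]

theorem map_eval_of_splits {p : R[X]} (hp : p.Splits) (x : R) :
    w (p.eval x) = w p.leadingCoeff + (p.roots.map fun s => w (x - s)).sum := by
  rw [hp.eval_eq_prod_roots, w.map_mul, w.map_multiset_prod, Multiset.map_map]
  rfl

/-- The valuative form of the symmetry `Res(p, q) = ± Res(q, p)` of the resultant. -/
theorem sum_map_eval_roots_add_nsmul {p q : R[X]} (hp : p.Splits) (hq : q.Splits) :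
    (p.roots.map fun r => w (q.eval r)).sum + q.natDegree • w p.leadingCoeff
      = p.natDegree • w q.leadingCoeff + (q.roots.map fun s => w (p.eval s)).sum := by
  simp only [w.map_eval_of_splits hp, w.map_eval_of_splits hq, Multiset.sum_map_add,
    Multiset.map_const', Multiset.sum_replicate, hp.natDegree_eq_card_roots,
    hq.natDegree_eq_card_roots]
  rw [Multiset.sum_map_sum_map p.roots q.roots]
  simp only [w.map_sub_swap]
  ac_rfl

end AddValuation

namespace Polynomial.HasGoodReduction

section LinearOrderedAddCommMonoidWithTop

variable {R Γ₀ : Type*} [CommRing R] [IsDomain R] [LinearOrderedAddCommMonoidWithTop Γ₀]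
  {w : AddValuation R Γ₀} {p : R[X]}

theorem map_leadingCoeff_iterate_comp_X (hp : p.HasGoodReduction w) (hd : p.natDegree ≠ 0)
    (k : ℕ) : w (p.comp^[k] X).leadingCoeff = 0 := by
  induction k with
  | zero => simp
  | succ k ih =>
    rw [Function.iterate_succ_apply', leadingCoeff_comp (by simp [natDegree_iterate_comp, hd]),
      w.map_mul, w.map_pow, hp.leadingCoeff_eq_zero, ih, nsmul_zero, add_zero]

theorem map_leadingCoeff_iterate_comp_X_sub_C (hp : p.HasGoodReduction w) (hd : p.natDegree ≠ 0)
    (n : ℕ) (c : R) : w (p.comp^[n] X - C c).leadingCoeff = 0 := by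
  have hpos : 0 < (p.comp^[n] X).natDegree := by
    rw [natDegree_iterate_comp, natDegree_X, mul_one]
    positivity
  rw [leadingCoeff_sub_of_degree_lt (degree_C_le.trans_lt (natDegree_pos_iff_degree_pos.1 hpos)),
    hp.map_leadingCoeff_iterate_comp_X hd n]

end LinearOrderedAddCommMonoidWithTop

variable {R Γ : Type*} [CommRing R] [AddCommGroup Γ] [LinearOrder Γ] [IsOrderedAddMonoid Γ]
  {w : AddValuation R (WithTop Γ)} {p : R[X]}

theorem map_eval_of_neg (hp : p.HasGoodReduction w) {x : R} {γ : Γ} (hx : w x = γ)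
    (hγ : γ < 0) : w (p.eval x) = ↑(p.natDegree • γ) := by
  have hlead : w (p.coeff p.natDegree * x ^ p.natDegree) = ↑(p.natDegree • γ) := by
    rw [w.map_mul, w.map_pow, coeff_natDegree, hp.leadingCoeff_eq_zero, zero_add, hx,
      WithTop.coe_nsmul]
  have hlower : (↑(p.natDegree • γ) : WithTop Γ)
      < w (∑ i ∈ Finset.range p.natDegree, p.coeff i * x ^ i) := by
    refine w.map_lt_sum WithTop.coe_ne_top fun i hi => ?_
    rw [w.map_mul, w.map_pow, hx, ← WithTop.coe_nsmul]
    exact (WithTop.coe_lt_coe.2 (strictAnti_nsmul_of_neg hγ (Finset.mem_range.1 hi))).trans_le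
      (le_add_of_nonneg_left (hp.coeff_nonneg i))
  rw [eval_eq_sum_range, Finset.sum_range_succ, w.map_add_eq_of_lt_right (hlead ▸ hlower), hlead]

theorem nonneg_of_finite_orbit (hp : p.HasGoodReduction w) (hd : 2 ≤ p.natDegree) {x : R}
    (hx : (Set.range fun m : ℕ => (fun y => p.eval y)^[m] x).Finite) : 0 ≤ w x := by
  by_contra! hneg
  obtain ⟨γ, hγ⟩ := WithTop.ne_top_iff_exists.1 hneg.ne_top
  have hγ0 : γ < 0 := by rw [← hγ] at hneg; exact_mod_cast hneg
  have horbit (m : ℕ) : w ((fun y => p.eval y)^[m] x) = ↑((p.natDegree ^ m) • γ) := by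
    induction m with
    | zero => simp [hγ]
    | succ m ih =>
      rw [Function.iterate_succ_apply', hp.map_eval_of_neg ih (nsmul_neg hγ0 (by positivity)),
        pow_succ', mul_nsmul']
  refine Set.infinite_range_of_injective (fun a b hab => ?_) hx
  have hval := congrArg w hab
  rw [horbit, horbit, WithTop.coe_inj] at hval
  exact ((strictAnti_nsmul_of_neg hγ0).comp_strictMono
    (pow_right_strictMono₀ (by omega : 1 < p.natDegree))).injective hval

end Polynomial.HasGoodReduction

theorem AddValuation.nonneg_of_isIntegral {R Γ : Type*} [CommRing R] [AddCommGroup Γ]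
    [LinearOrder Γ] [IsOrderedAddMonoid Γ] (w : AddValuation R (WithTop Γ)) {x : R}
    (hx : IsIntegral ℤ x) : 0 ≤ w x := by
  obtain ⟨q, hmonic, hroot⟩ := hx
  by_contra! hneg
  obtain ⟨γ, hγ⟩ := WithTop.ne_top_iff_exists.1 hneg.ne_top
  have hγ0 : γ < 0 := by rw [← hγ] at hneg; exact_mod_cast hneg
  have hgood : (q.map (algebraMap ℤ R)).HasGoodReduction w :=
    ⟨fun i => by rw [coeff_map]; exact w.map_intCast_nonneg _,
      by rw [(hmonic.map _).leadingCoeff, w.map_one]⟩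
  have hval := hgood.map_eval_of_neg hγ.symm hγ0
  rw [eval_map, hroot, w.map_zero] at hval
  exact WithTop.top_ne_coe hval

namespace Polynomial.IsPostcriticallyFinite

variable {Γ : Type*} [AddCommGroup Γ] [LinearOrder Γ] [IsOrderedAddMonoid Γ]

theorem map_eval_iterate_comp_X_nonneg_of_isRoot {R : Type*} [CommRing R]
    {w : AddValuation R (WithTop Γ)} {p : R[X]} (hpcf : p.IsPostcriticallyFinite)
    (hp : p.HasGoodReduction w) (hd : 2 ≤ p.natDegree) {k n : ℕ} (hkn : k ≤ n) {s : R}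
    (hs : ((derivative p).comp (p.comp^[k] X)).IsRoot s) :
    0 ≤ w ((p.comp^[n] X).eval s) := by
  simp only [IsRoot, eval_comp, iterate_comp_eval, eval_X] at hs ⊢
  obtain ⟨j, rfl⟩ := Nat.exists_eq_add_of_le' hkn
  rw [Function.iterate_add_apply]
  exact w.map_eval_iterate_nonneg hp.coeff_nonneg (hp.nonneg_of_finite_orbit hd (hpcf _ hs)) j

variable {L : Type*} [Field L] [IsAlgClosed L] {w : AddValuation L (WithTop Γ)} {p : L[X]}

theorem nsmul_le_sum_map_eval_roots (hpcf : p.IsPostcriticallyFinite) (hp : p.HasGoodReduction w)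
    (hd : 2 ≤ p.natDegree) {c : L} (hc : 0 ≤ w c) {k n : ℕ} (hkn : k ≤ n) :
    p.natDegree ^ n • w (derivative p).leadingCoeff
      ≤ ((p.comp^[n] X - C c).roots.map
          fun r => w (((derivative p).comp (p.comp^[k] X)).eval r)).sum := by
  have hdeg (m : ℕ) : (p.comp^[m] X).natDegree = p.natDegree ^ m := by
    rw [natDegree_iterate_comp, natDegree_X, mul_one]
  have hlc : w ((derivative p).comp (p.comp^[k] X)).leadingCoeff
      = w (derivative p).leadingCoeff := by
    rw [leadingCoeff_comp (by rw [hdeg]; positivity), w.map_mul, w.map_pow,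
      hp.map_leadingCoeff_iterate_comp_X (by omega) k, nsmul_zero, add_zero]
  have hres := w.sum_map_eval_roots_add_nsmul (IsAlgClosed.splits (p.comp^[n] X - C c))
    (IsAlgClosed.splits ((derivative p).comp (p.comp^[k] X)))
  rw [hp.map_leadingCoeff_iterate_comp_X_sub_C (by omega), nsmul_zero, add_zero,
    natDegree_sub_C, hdeg, hlc] at hres
  rw [hres]
  refine le_add_of_nonneg_right (Multiset.sum_nonneg fun y hy => ?_)
  obtain ⟨s, hs, rfl⟩ := Multiset.mem_map.1 hy
  rw [eval_sub, eval_C]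
  exact w.map_le_sub
    (hpcf.map_eval_iterate_comp_X_nonneg_of_isRoot hp hd hkn (isRoot_of_mem_roots hs)) hc

theorem nsmul_le_map_prod_eval_derivative_roots (hpcf : p.IsPostcriticallyFinite)
    (hp : p.HasGoodReduction w) (hd : 2 ≤ p.natDegree) {c : L} (hc : 0 ≤ w c) (n : ℕ) :
    (n * p.natDegree ^ n) • w (derivative p).leadingCoeff
      ≤ w ((p.comp^[n] X - C c).roots.map
          fun r => (derivative (p.comp^[n] X - C c)).eval r).prod := by
  simp only [w.map_multiset_prod, Multiset.map_map, Function.comp_def, derivative_sub,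
    derivative_C, sub_zero, derivative_iterate_comp_X, eval_prod, w.map_prod,
    Multiset.sum_map_sum]
  calc (n * p.natDegree ^ n) • w (derivative p).leadingCoeff
      = ∑ _k ∈ Finset.range n, p.natDegree ^ n • w (derivative p).leadingCoeff := by
        rw [Finset.sum_const, Finset.card_range, mul_nsmul']
    _ ≤ _ := Finset.sum_le_sum fun k hk =>
        hpcf.nsmul_le_sum_map_eval_roots hp hd hc (Finset.mem_range.1 hk).le

end Polynomial.IsPostcriticallyFinite

theorem stmt_8_general {K : Type*} [Field K] [NumberField K]
    {Γ : Type*} [AddCommGroup Γ] [LinearOrder Γ] [IsOrderedAddMonoid Γ]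
    (v : AddValuation K (WithTop Γ))
    (w : AddValuation (AlgebraicClosure K) (WithTop Γ))
    (hext : ∀ x : K, w (algebraMap K (AlgebraicClosure K) x) = v x)
    (p : ℕ) (hp : p.Prime)
    (φ : Polynomial K) (hdeg : 1 ≤ φ.natDegree) (hpd : p ∣ φ.natDegree)
    (hint : ∀ i, 0 ≤ v (φ.coeff i)) (hlead : v φ.leadingCoeff = 0)
    (hpcf : ∀ r : AlgebraicClosure K,
      Polynomial.aeval r (Polynomial.derivative φ) = 0 →
        (Set.range fun n : ℕ =>
          (fun x : AlgebraicClosure K => Polynomial.aeval x φ)^[n] r).Finite)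
    (t₀ : K) (ht₀ : IsIntegral ℤ t₀)
    (n : ℕ) :
    (n * φ.natDegree ^ n) • v (p : K)
      ≤ w (polyDisc (φ.comp^[n] Polynomial.X - Polynomial.C t₀)) := by
  set f := algebraMap K (AlgebraicClosure K)
  have hd : 2 ≤ φ.natDegree := hp.two_le.trans (Nat.le_of_dvd (by omega) hpd)
  have hgood : (φ.map f).HasGoodReduction w :=
    ⟨fun i => by rw [coeff_map, hext]; exact hint i, by rw [leadingCoeff_map, hext, hlead]⟩
  have hpcf' : (φ.map f).IsPostcriticallyFinite := fun c hc => by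
    simpa only [f, eval_map_algebraMap] using
      hpcf c (by rwa [derivative_map, IsRoot, eval_map_algebraMap] at hc)
  have ht₀' : 0 ≤ w (f t₀) := hext t₀ ▸ v.nonneg_of_isIntegral ht₀
  have hderiv : v p ≤ w (derivative (φ.map f)).leadingCoeff := by
    rw [derivative_map, leadingCoeff_map, hext, leadingCoeff_derivative, v.map_mul, hlead,
      zero_add]
    exact v.le_map_natCast_of_dvd hpd
  have hbound := hpcf'.nsmul_le_map_prod_eval_derivative_roots hgood
    (by rwa [natDegree_map]) ht₀' n
  rw [natDegree_map] at hbound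
  have hmap : (φ.comp^[n] X - C t₀).map f = (φ.map f).comp^[n] X - C (f t₀) := by
    rw [Polynomial.map_sub, map_iterate_comp, map_X, map_C]
  unfold polyDisc
  rw [w.map_mul, w.map_mul, w.map_pow, w.map_neg, w.map_one, nsmul_zero, zero_add,
    ← leadingCoeff_map, hmap, AddValuation.map_zpow_eq_zero
      (hgood.map_leadingCoeff_iterate_comp_X_sub_C (by rw [natDegree_map]; omega) n _), zero_add]
  exact (nsmul_le_nsmul_right hderiv _).trans hbound

/-- Let `K` be a number field with ring of integers `O_K`, `v` a
valuation of `K` of residue characteristic `p` (i.e. `p` prime and `v(p) > 0`), and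
`φ ∈ K[x]` a post-critically finite polynomial of degree `d` divisible by `p` with good
reduction at `v`.  Then for any `t₀ ∈ O_K` and any `n ≥ 1`,
`v(disc(φ^∘n(x) − t₀)) ≥ n·d^n·v(p)`; the discriminant is computed in an algebraic
closure of `K` and the inequality holds for any extension `w` of `v` to that closure. -/
theorem stmt_8 {K : Type*} [Field K] [NumberField K]
    {Γ : Type*} [AddCommGroup Γ] [LinearOrder Γ] [IsOrderedAddMonoid Γ]
    (v : AddValuation K (WithTop Γ))
    (w : AddValuation (AlgebraicClosure K) (WithTop Γ))
    (hext : ∀ x : K, w (algebraMap K (AlgebraicClosure K) x) = v x)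
    (p : ℕ) (hp : p.Prime) (hvp : 0 < v (p : K))
    (φ : Polynomial K) (hdeg : 1 ≤ φ.natDegree) (hpd : p ∣ φ.natDegree)
    (hint : ∀ i, 0 ≤ v (φ.coeff i)) (hlead : v φ.leadingCoeff = 0)
    (hpcf : ∀ r : AlgebraicClosure K,
      Polynomial.aeval r (Polynomial.derivative φ) = 0 →
        (Set.range fun n : ℕ =>
          (fun x : AlgebraicClosure K => Polynomial.aeval x φ)^[n] r).Finite)
    (t₀ : K) (ht₀ : IsIntegral ℤ t₀)
    (n : ℕ) (hn : 1 ≤ n) :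
    (n * φ.natDegree ^ n) • v (p : K)
      ≤ w (polyDisc (φ.comp^[n] Polynomial.X - Polynomial.C t₀)) :=
  stmt_8_general v w hext p hp φ hdeg hpd hint hlead hpcf t₀ ht₀ n
end

section
/- Over ℚ̄, the polynomial φ(x) = x³ + (3/2)x has exactly two critical points, namely ±i/√2, both of which are fixed points of φ; moreover φ is not conjugate via any affine map γ(x) = bx + c over ℚ̄ to a monic polynomial with coefficients in the ring of algebraic integers. -/
open Polynomial

/-- Over `ℚ̄`, the polynomial `φ(x) = x³ + (3/2)x` has exactly two
critical points, namely the two square roots `±i/√2` of `−1/2`, both of which are fixed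
points of `φ`; moreover `φ` is not conjugate, via any affine map `γ(x) = bx + c` over
`ℚ̄`, to a monic polynomial all of whose coefficients are algebraic integers. -/
theorem stmt_13 :
    (∃ u : AlgebraicClosure ℚ,
      u ^ 2 = algebraMap ℚ (AlgebraicClosure ℚ) (-(1/2)) ∧ u ≠ -u ∧
      {r : AlgebraicClosure ℚ |
          (Polynomial.derivative
            (Polynomial.X ^ 3
              + Polynomial.C (algebraMap ℚ (AlgebraicClosure ℚ) (3/2)) * Polynomial.X)).eval r
            = 0}
        = {u, -u} ∧
      (Polynomial.X ^ 3
        + Polynomial.C (algebraMap ℚ (AlgebraicClosure ℚ) (3/2)) * Polynomial.X).eval u = u ∧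
      (Polynomial.X ^ 3
        + Polynomial.C (algebraMap ℚ (AlgebraicClosure ℚ) (3/2)) * Polynomial.X).eval (-u)
        = -u)
    ∧ ¬ ∃ b c : AlgebraicClosure ℚ, b ≠ 0 ∧
        (Polynomial.C b⁻¹ *
            ((Polynomial.X ^ 3
                + Polynomial.C (algebraMap ℚ (AlgebraicClosure ℚ) (3/2)) * Polynomial.X).comp
              (Polynomial.C b * Polynomial.X + Polynomial.C c))
          - Polynomial.C (b⁻¹ * c)).Monic ∧
        ∀ i, IsIntegral ℤ
          ((Polynomial.C b⁻¹ *
              ((Polynomial.X ^ 3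
                  + Polynomial.C (algebraMap ℚ (AlgebraicClosure ℚ) (3/2)) * Polynomial.X).comp
                (Polynomial.C b * Polynomial.X + Polynomial.C c))
            - Polynomial.C (b⁻¹ * c)).coeff i) := by
  set K := AlgebraicClosure ℚ
  have h32 : algebraMap ℚ K (3/2) = 3/2 := by
    rw [map_div₀]; norm_num
  have h32' : algebraMap ℚ (AlgebraicClosure ℚ) (3/2) = 3/2 := by
    rw [map_div₀]; norm_num
  have hh : algebraMap ℚ K (-(1/2)) = -(1/2 : K) := by
    rw [map_neg, map_div₀]; norm_num
  constructor
  · obtain ⟨u, hu⟩ := IsAlgClosed.exists_pow_nat_eq (algebraMap ℚ K (-(1/2))) (n := 2) (by norm_num)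
    have hu' : u ^ 2 = -(1/2 : K) := by rw [hu, hh]
    have hu0 : u ≠ 0 := by
      intro h; rw [h] at hu'; norm_num at hu'
    refine ⟨u, hu, ?_, ?_, ?_, ?_⟩
    · intro h
      apply hu0
      have : (2:K) * u = 0 := by linear_combination h
      simpa using this
    · ext r
      simp only [Set.mem_setOf_eq, Set.mem_insert_iff, Set.mem_singleton_iff,
        derivative_add, derivative_pow, derivative_X, derivative_C_mul, eval_add, eval_mul,
        eval_pow, eval_X, eval_C, eval_one, h32, h32']
      constructor
      · intro h
        have h2 : (r - u) * (r + u) = 0 := by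
          field_simp at h
          linear_combination h/6 - hu'
        rcases mul_eq_zero.1 h2 with h | h
        · left; linear_combination h
        · right; linear_combination h
      · rintro (rfl | rfl) <;> · push_cast; ring_nf; linear_combination (3:K) * hu'
    · simp only [eval_add, eval_mul, eval_pow, eval_X, eval_C, h32, h32']
      linear_combination u * hu'
    · simp only [eval_add, eval_mul, eval_pow, eval_X, eval_C, eval_neg, h32, h32']
      linear_combination -u * hu'
  · rintro ⟨b, c, hb, hmon, hint⟩
    set t : K := algebraMap ℚ K (3/2) with ht
    set q : K[X] := Polynomial.C b⁻¹ *
            ((Polynomial.X ^ 3 + Polynomial.C t * Polynomial.X).comp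
              (Polynomial.C b * Polynomial.X + Polynomial.C c))
          - Polynomial.C (b⁻¹ * c) with hq
    have hbb : b⁻¹ * b = 1 := inv_mul_cancel₀ hb
    set a3 : K := b⁻¹ * b^3 with ha3
    set a2 : K := b⁻¹ * (3 * b^2 * c) with ha2
    set a1 : K := b⁻¹ * (3 * b * c^2 + t * b) with ha1
    set a0 : K := b⁻¹ * (c^3 + t * c) - b⁻¹ * c with ha0
    have hqe : q = C a3 * X^3 + C a2 * X^2 + C a1 * X + C a0 := by
      rw [hq, ha3, ha2, ha1, ha0]
      simp only [add_comp, mul_comp, pow_comp, X_comp, C_comp, map_mul, map_add, map_sub,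
        map_pow, map_ofNat]
      ring
    have hc3 : q.coeff 3 = a3 := by
      rw [hqe]; simp [coeff_C]
    have hc2 : q.coeff 2 = a2 := by
      rw [hqe]; simp [coeff_C]
    have hc1 : q.coeff 1 = a1 := by
      rw [hqe]; simp [coeff_C]
    have ha3' : a3 ≠ 0 := by
      rw [ha3]; exact mul_ne_zero (inv_ne_zero hb) (pow_ne_zero 3 hb)
    have hdeg : q.natDegree = 3 := by
      rw [hqe]
      compute_degree!
    have hb2 : b^2 = 1 := by
      have := hmon.coeff_natDegree
      rw [hdeg, hc3, ha3] at this
      calc b^2 = b⁻¹ * b^3 := by field_simp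
      _ = 1 := this
    have h1 : IsIntegral ℤ (3 * c^2 + t) := by
      have := hint 1
      rw [hc1, ha1] at this
      have e : b⁻¹ * (3 * b * c^2 + t * b) = 3 * c^2 + t := by
        field_simp
      rwa [e] at this
    have h2 : IsIntegral ℤ (3 * c) := by
      have := hint 2
      rw [hc2, ha2] at this
      have e : b⁻¹ * (3 * b^2 * c) = b * (3 * c) := by
        field_simp
      rw [e] at this
      have e2 : b * (3 * c) = 3 * c ∨ b * (3 * c) = -(3 * c) := by
        have : (b - 1) * (b + 1) = 0 := by linear_combination hb2
        rcases mul_eq_zero.1 this with h | h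
        · left; have : b = 1 := by linear_combination h
          rw [this, one_mul]
        · right; have : b = -1 := by linear_combination h
          rw [this]; ring
      rcases e2 with e2 | e2
      · rwa [e2] at this
      · rw [e2] at this
        simpa using this.neg
    have h92 : IsIntegral ℤ (algebraMap ℚ K (9/2)) := by
      have key : algebraMap ℚ K (9/2) = 3 * (3 * c^2 + t) - (3*c) * (3*c) := by
        have : algebraMap ℚ K (9/2) = 3 * t := by
          rw [ht, show (9/2:ℚ) = 3 * (3/2) by norm_num, map_mul, map_ofNat]
        rw [this]; ring
      rw [key]
      have h3K : IsIntegral ℤ (3 : K) := by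
        have := isIntegral_algebraMap (R := ℤ) (A := K) (x := 3)
        rwa [map_ofNat] at this
      exact (h3K.mul h1).sub (h2.mul h2)
    rw [isIntegral_algebraMap_iff (algebraMap ℚ K).injective] at h92
    have := IsIntegrallyClosed.isIntegral_iff.mp h92
    obtain ⟨z, hz⟩ := this
    have : (z : ℚ) = 9/2 := by exact_mod_cast hz
    have : (2 * z : ℤ) = 9 := by exact_mod_cast (by linarith : (2 * z : ℚ) = 9)
    omega
end

section
/- Let φ(x) = x² + x + μ with μ ∈ ℤ. Then φ is not post-critically finite, i.e., the forward orbit of its unique critical point −1/2 under iteration of φ is infinite. -/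
/-!
At `2` the critical point `-1/2` has `|-1/2|₂ = 2 > 1`. For `|x|ₚ > 1` and `|c|ₚ ≤ 1` the
ultrametric inequality makes `x²` dominate, so `|x² + x + c|ₚ = |x|ₚ²`. Hence the `2`-adic
absolute values along the critical orbit are `2 ^ 2 ^ n`, pairwise distinct.
-/

open Function

namespace padicNorm

variable {p : ℕ} [Fact p.Prime]

theorem add_eq_left_of_lt {q r : ℚ} (h : padicNorm p r < padicNorm p q) :
    padicNorm p (q + r) = padicNorm p q := by
  rw [add_eq_max_of_ne h.ne', max_eq_left h.le]

theorem sq_add_self_add_of_one_lt {x c : ℚ} (hx : 1 < padicNorm p x) (hc : padicNorm p c ≤ 1) :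
    padicNorm p (x ^ 2 + x + c) = padicNorm p x ^ 2 := by
  have hsq : padicNorm p (x ^ 2) = padicNorm p x ^ 2 := by rw [sq, padicNorm.mul, sq]
  have hxc : padicNorm p (x + c) = padicNorm p x := add_eq_left_of_lt (hc.trans_lt hx)
  have hlt : padicNorm p (x + c) < padicNorm p (x ^ 2) := by rw [hxc, hsq]; nlinarith
  rw [add_assoc, add_eq_left_of_lt hlt, hsq]

theorem iterate_sq_add_self_add {x c : ℚ} (hx : 1 < padicNorm p x) (hc : padicNorm p c ≤ 1)
    (n : ℕ) : padicNorm p ((fun y : ℚ => y ^ 2 + y + c)^[n] x) = padicNorm p x ^ 2 ^ n := by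
  induction n with
  | zero => simp
  | succ n ih =>
    have hn : 1 < padicNorm p ((fun y : ℚ => y ^ 2 + y + c)^[n] x) := by
      rw [ih]
      exact one_lt_pow₀ hx (by positivity)
    rw [iterate_succ_apply', sq_add_self_add_of_one_lt hn hc, ih, ← pow_mul, pow_succ]

end padicNorm

theorem infinite_range_iterate_sq_add_self_add {p : ℕ} [Fact p.Prime] {x c : ℚ}
    (hx : 1 < padicNorm p x) (hc : padicNorm p c ≤ 1) :
    (Set.range fun n : ℕ => (fun y : ℚ => y ^ 2 + y + c)^[n] x).Infinite := by
  refine Set.infinite_range_of_injective (Injective.of_comp (f := padicNorm p) ?_)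
  have hmono : StrictMono fun n : ℕ => padicNorm p x ^ 2 ^ n :=
    (pow_right_strictMono₀ hx).comp (pow_right_strictMono₀ one_lt_two)
  simpa only [comp_def, padicNorm.iterate_sq_add_self_add hx hc] using hmono.injective

/-- Let `φ(x) = x² + x + μ` with `μ ∈ ℤ`.  Then `φ` is not
post-critically finite: the forward orbit of its unique critical point `−1/2` under
iteration of `φ` is infinite. -/
theorem stmt_14 (μ : ℤ) :
    (Set.range fun n : ℕ =>
      (fun x : ℚ => x ^ 2 + x + (μ : ℚ))^[n] (-(1/2))).Infinite := by
  refine infinite_range_iterate_sq_add_self_add (p := 2) ?_ (padicNorm.of_int μ)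
  have h2 : padicNorm 2 (2 : ℚ) = 2⁻¹ := mod_cast padicNorm.padicNorm_p_of_prime (p := 2)
  rw [padicNorm.neg, padicNorm.div, padicNorm.one, h2]
  norm_num
end

section
/- For φ(x) = x² + x + μ with μ ∈ ℤ, the 2-adic valuation of φ^∘n(−1/2) is −2^n for every n ≥ 1; in particular the orbit of −1/2 under φ is infinite. -/
/-!
If `v₂(x) < 0`, then `x²` strictly dominates `x + μ` in valuation, so `v₂(x² + x + μ) = 2 v₂(x)`
and the valuation stays negative. Starting from `v₂(-1/2) = -1`, the valuation doubles at each
step, so the iterates have pairwise distinct valuations `-2ⁿ`.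
-/

namespace padicValRat

variable {p : ℕ} [Fact p.Prime]

theorem add_eq_of_lt_of_ne_zero {q r : ℚ} (hq : q ≠ 0)
    (hval : padicValRat p q < padicValRat p r) : padicValRat p (q + r) = padicValRat p q := by
  rcases eq_or_ne r 0 with rfl | hr
  · rw [add_zero]
  have hqr : q + r ≠ 0 := by
    intro h
    rw [eq_neg_of_add_eq_zero_right h, padicValRat.neg] at hval
    exact lt_irrefl _ hval
  exact add_eq_of_lt hqr hq hr hval

theorem sq_add_self_add_of_neg {q r : ℚ} (hq : padicValRat p q < 0)
    (hr : 0 ≤ padicValRat p r) : padicValRat p (q ^ 2 + q + r) = 2 * padicValRat p q := by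
  have hq0 : q ≠ 0 := by rintro rfl; simp at hq
  have hqr : padicValRat p (q + r) = padicValRat p q :=
    add_eq_of_lt_of_ne_zero hq0 (hq.trans_le hr)
  have hsq : padicValRat p (q ^ 2) = 2 * padicValRat p q := by
    rw [padicValRat.pow]; norm_num
  rw [add_assoc, add_eq_of_lt_of_ne_zero (pow_ne_zero 2 hq0) (by omega), hsq]

theorem iterate_sq_add_self_add {q r : ℚ} (hq : padicValRat p q < 0)
    (hr : 0 ≤ padicValRat p r) (n : ℕ) :
    padicValRat p ((fun x : ℚ => x ^ 2 + x + r)^[n] q) = 2 ^ n * padicValRat p q := by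
  induction n with
  | zero => simp
  | succ n ih =>
    have hneg : padicValRat p ((fun x : ℚ => x ^ 2 + x + r)^[n] q) < 0 := by
      rw [ih]; exact mul_neg_of_pos_of_neg (by positivity) hq
    rw [Function.iterate_succ_apply', sq_add_self_add_of_neg hneg hr, ih, pow_succ]
    ring

end padicValRat

theorem padicValRat_two_neg_half : padicValRat 2 (-(1 / 2)) = -1 := by
  rw [padicValRat.neg, one_div, padicValRat.inv,
    show (2 : ℚ) = (2 : ℕ) by norm_num, padicValRat.self one_lt_two]

/-- For `φ(x) = x² + x + μ` with `μ ∈ ℤ`, the `2`-adic valuation of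
`φ^∘n(−1/2)` is `−2^n` for every `n ≥ 1`; in particular the orbit of `−1/2` under `φ` is
infinite. -/
theorem stmt_15 (μ : ℤ) :
    (∀ n : ℕ, 1 ≤ n →
      padicValRat 2 ((fun x : ℚ => x ^ 2 + x + (μ : ℚ))^[n] (-(1/2))) = -(2 ^ n))
    ∧ (Set.range fun n : ℕ =>
        (fun x : ℚ => x ^ 2 + x + (μ : ℚ))^[n] (-(1/2))).Infinite := by
  have hval (n : ℕ) :
      padicValRat 2 ((fun x : ℚ => x ^ 2 + x + (μ : ℚ))^[n] (-(1/2))) = -(2 ^ n) := by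
    rw [padicValRat.iterate_sq_add_self_add (by rw [padicValRat_two_neg_half]; norm_num)
      (by rw [padicValRat.of_int]; positivity), padicValRat_two_neg_half, mul_neg_one]
  refine ⟨fun n _ => hval n, Set.infinite_range_of_injective fun a b hab => ?_⟩
  have h := congrArg (padicValRat 2) hab
  rw [hval, hval, neg_inj] at h
  exact Nat.pow_right_injective le_rfl (by exact_mod_cast h)
end

section
/- If r ∈ ℤ and φ(x) = (x − r)² has a periodic branch point, i.e., the branch point 0 of φ is periodic under φ, then r ∈ {0, 1, 2}. -/
/-- If `r ∈ ℤ` and the branch point `0` of `φ(x) = (x − r)²` is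
periodic under `φ` (i.e. `φ^∘n(0) = 0` for some `n ≥ 1`), then `r ∈ {0, 1, 2}`. -/
theorem stmt_17 (r : ℤ)
    (h : ∃ n : ℕ, 1 ≤ n ∧ (fun x : ℤ => (x - r) ^ 2)^[n] 0 = 0) :
    r = 0 ∨ r = 1 ∨ r = 2 := by
  by_contra hc
  push_neg at hc
  obtain ⟨h0, h1, h2⟩ := hc
  have hr : r ≤ -1 ∨ 3 ≤ r := by omega
  obtain ⟨n, hn, heq⟩ := h
  have key : ∀ m, 1 ≤ m →
      1 ≤ (fun x : ℤ => (x - r) ^ 2)^[m] 0 ∧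
      r ^ 2 ≤ (fun x : ℤ => (x - r) ^ 2)^[m] 0 := by
    intro m hm
    induction m with
    | zero => omega
    | succ k ih =>
      rcases Nat.eq_zero_or_pos k with hk | hk
      · subst hk
        have : (fun x : ℤ => (x - r) ^ 2)^[1] 0 = r ^ 2 := by
          simp
        rw [this]
        refine ⟨?_, le_rfl⟩
        rcases hr with hr | hr <;> nlinarith
      · obtain ⟨hx1, hx2⟩ := ih hk
        rw [Function.iterate_succ_apply']
        set x := (fun x : ℤ => (x - r) ^ 2)^[k] 0 with hx
        show 1 ≤ (x - r) ^ 2 ∧ r ^ 2 ≤ (x - r) ^ 2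
        rcases hr with hr | hr
        · constructor <;> nlinarith
        · have hx3 : 3 ≤ x - 2 * r := by nlinarith
          have hx4 : 6 ≤ x - r := by nlinarith
          have hx5 : 0 < x * (x - 2 * r) :=
            mul_pos (by linarith) (by linarith)
          constructor <;> nlinarith
  have := (key n hn).1
  omega
end

section
/- Let φ(x) = x² − 2 and t_0 ∈ ℤ with t_0 ≡ 0 or 1 (mod 4). Then for every n ≥ 1, the polynomial φ^∘n(x) − t_0 is irreducible over ℚ. -/
/-!
Write `f = φ^∘n - t₀` over `ℤ` and choose `a ∈ {0, 1}` with `a ≡ t₀ (mod 2)`. Modulo 2 the map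
`φ` is `x ↦ x²`, so `f(X + a) ≡ (X + a)^(2^n) - t₀ ≡ X^(2^n)`; and `f(a) ≡ 2 (mod 4)` because
`φ^∘n(0) ≡ 2 (mod 4)` and `φ^∘n(1) = -1`. Hence `f(X + a)` is Eisenstein at 2, and Gauss's lemma
transfers irreducibility from `ℤ[X]` to `ℚ[X]`.
-/

open Polynomial

namespace Polynomial

theorem Monic.sub_C_of_natDegree_pos {R : Type*} [CommRing R] {p : R[X]} (hp : p.Monic)
    (hdeg : 0 < p.natDegree) (c : R) : (p - C c).Monic :=
  hp.sub_of_left (degree_C_le.trans_lt (natDegree_pos_iff_degree_pos.mp hdeg))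

theorem irreducible_of_map_zmod_eq_X_pow {p : ℕ} [hp : Fact p.Prime] {f : ℤ[X]} (hf : f.Monic)
    {d : ℕ} (hd : 0 < d) (hmod : f.map (Int.castRingHom (ZMod p)) = X ^ d)
    (h0 : ¬ (p : ℤ) ^ 2 ∣ f.coeff 0) : Irreducible f := by
  have hdeg : f.natDegree = d := by
    simpa [hmod] using (hf.natDegree_map (Int.castRingHom (ZMod p))).symm
  have hP : (Ideal.span {(p : ℤ)}).IsPrime :=
    (Ideal.span_singleton_prime (by exact_mod_cast hp.out.ne_zero)).mpr
      (Nat.prime_iff_prime_int.mp hp.out)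
  refine (hf.isEisensteinAt_of_mem_of_notMem hP.ne_top ?_ ?_).irreducible hP hf.isPrimitive
    (hdeg ▸ hd)
  · intro k hk
    rw [Ideal.mem_span_singleton, ← ZMod.intCast_zmod_eq_zero_iff_dvd,
      ← eq_intCast (Int.castRingHom _), ← coeff_map, hmod, coeff_X_pow, if_neg (by omega)]
  · rwa [Ideal.span_singleton_pow, Ideal.mem_span_singleton]

theorem irreducible_map_rat_of_taylor_map_zmod_eq_X_pow {p : ℕ} [Fact p.Prime] {f : ℤ[X]}
    (hf : f.Monic) (a : ℤ) {d : ℕ} (hd : 0 < d)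
    (hmod : (taylor a f).map (Int.castRingHom (ZMod p)) = X ^ d)
    (h0 : ¬ (p : ℤ) ^ 2 ∣ f.eval a) : Irreducible (f.map (Int.castRingHom ℚ)) := by
  have htaylor : Irreducible (taylor a f) :=
    irreducible_of_map_zmod_eq_X_pow (by rw [taylor_apply]; exact hf.comp_X_add_C a) hd hmod
      (by rwa [taylor_coeff_zero])
  rw [← IsPrimitive.Int.irreducible_iff_irreducible_map_cast hf.isPrimitive,
    ← MulEquiv.irreducible_iff (taylorEquiv a)]
  exact htaylor

end Polynomial

section SqSubTwoIter

variable (R : Type*) [CommRing R]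

noncomputable def sqSubTwoIter (n : ℕ) : R[X] := ((X ^ 2 - C 2 : R[X]).comp)^[n] X

theorem sqSubTwoIter_succ (n : ℕ) : sqSubTwoIter R (n + 1) = sqSubTwoIter R n ^ 2 - C 2 := by
  rw [sqSubTwoIter, Function.iterate_succ_apply', ← sqSubTwoIter, sub_comp, pow_comp, X_comp,
    C_comp]

theorem map_sqSubTwoIter {S : Type*} [CommRing S] (g : R →+* S) (n : ℕ) :
    (sqSubTwoIter R n).map g = sqSubTwoIter S n := by
  induction n with
  | zero => exact map_X g
  | succ n ih => rw [sqSubTwoIter_succ, sqSubTwoIter_succ, Polynomial.map_sub,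
      Polynomial.map_pow, ih, map_C, map_ofNat]

theorem natDegree_sqSubTwoIter [NoZeroDivisors R] [Nontrivial R] (n : ℕ) :
    (sqSubTwoIter R n).natDegree = 2 ^ n := by
  induction n with
  | zero => exact natDegree_X
  | succ n ih => rw [sqSubTwoIter_succ, natDegree_sub_C, natDegree_pow, ih, pow_succ, mul_comm]

theorem monic_sqSubTwoIter [IsDomain R] (n : ℕ) : (sqSubTwoIter R n).Monic := by
  induction n with
  | zero => exact monic_X
  | succ n ih =>
    rw [sqSubTwoIter_succ]
    refine (ih.pow 2).sub_C_of_natDegree_pos ?_ 2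
    rw [natDegree_pow, natDegree_sqSubTwoIter]
    positivity

theorem sqSubTwoIter_of_charTwo [CharP R 2] (n : ℕ) : sqSubTwoIter R n = X ^ 2 ^ n := by
  induction n with
  | zero => exact (pow_one X).symm
  | succ n ih =>
    rw [sqSubTwoIter_succ, ih, CharTwo.two_eq_zero (R := R), C_0, sub_zero, ← pow_mul, ← pow_succ]

theorem eval_one_sqSubTwoIter_succ (n : ℕ) : (sqSubTwoIter R (n + 1)).eval 1 = -1 := by
  induction n with
  | zero => norm_num [sqSubTwoIter_succ, sqSubTwoIter]
  | succ n ih => rw [sqSubTwoIter_succ, eval_sub, eval_pow, ih, eval_C]; norm_num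

end SqSubTwoIter

theorem eval_zero_sqSubTwoIter_succ_modEq (n : ℕ) :
    (sqSubTwoIter ℤ (n + 1)).eval 0 ≡ 2 [ZMOD 4] := by
  induction n with
  | zero => norm_num [sqSubTwoIter_succ, sqSubTwoIter, Int.ModEq]
  | succ n ih =>
    rw [sqSubTwoIter_succ, eval_sub, eval_pow, eval_C]
    exact (ih.pow 2).sub_right 2

/-- Let `φ(x) = x² − 2` and `t₀ ∈ ℤ` with `t₀ ≡ 0` or `1 (mod 4)`.
Then for every `n ≥ 1`, the polynomial `φ^∘n(x) − t₀` is irreducible over `ℚ`. -/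
theorem stmt_18 (t₀ : ℤ) (ht : t₀ % 4 = 0 ∨ t₀ % 4 = 1) (n : ℕ) (hn : 1 ≤ n) :
    Irreducible
      (((Polynomial.X ^ 2 - Polynomial.C (2 : ℚ)).comp)^[n] Polynomial.X
        - Polynomial.C (t₀ : ℚ)) := by
  obtain ⟨m, rfl⟩ : ∃ m, n = m + 1 := ⟨n - 1, by omega⟩
  set f : ℤ[X] := sqSubTwoIter ℤ (m + 1) - C t₀
  obtain ⟨a, hat, hfa⟩ : ∃ a : ℤ, (a : ZMod 2) = t₀ ∧ ¬ (2 : ℤ) ^ 2 ∣ f.eval a := by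
    have h0 := eval_zero_sqSubTwoIter_succ_modEq m
    have h1 := eval_one_sqSubTwoIter_succ ℤ m
    simp only [f, eval_sub, eval_C, Int.ModEq] at h0 h1 ⊢
    rcases ht with ht | ht
    · exact ⟨0, (ZMod.intCast_eq_intCast_iff_dvd_sub _ _ 2).mpr (by omega), by omega⟩
    · exact ⟨1, (ZMod.intCast_eq_intCast_iff_dvd_sub _ _ 2).mpr (by omega), by omega⟩
  have hmod : (taylor a f).map (Int.castRingHom (ZMod 2)) = X ^ 2 ^ (m + 1) := by
    rw [map_taylor, Polynomial.map_sub, map_sqSubTwoIter, sqSubTwoIter_of_charTwo, map_C,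
      taylor_apply, sub_comp, X_pow_comp, C_comp, add_pow_char_pow, ← C_pow, ZMod.pow_card_pow,
      eq_intCast, eq_intCast, hat, add_sub_cancel_right]
  have hf : f.Monic := (monic_sqSubTwoIter ℤ _).sub_C_of_natDegree_pos
    (by rw [natDegree_sqSubTwoIter]; positivity) t₀
  have hQ := irreducible_map_rat_of_taylor_map_zmod_eq_X_pow hf a (by positivity) hmod hfa
  rwa [Polynomial.map_sub, map_sqSubTwoIter, map_C, eq_intCast] at hQ
end

section
/- Let φ(x) = x² − 2 and t_0 ∈ ℤ. Define D_n = disc(φ^∘n(x) − t_0). Then D_1 = 4(t_0 + 2) and D_{n+1} = 4^{2^n} · D_n² · (2 − t_0) for all n ≥ 1. -/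
open Polynomial

section Aux
variable {K : Type*} [Field K]

noncomputable def phIter (K : Type*) [Field K] (n : ℕ) : K[X] :=
  ((X ^ 2 - C (2 : K)).comp)^[n] X

@[simp] lemma phIter_zero : phIter K 0 = X := rfl

lemma phIter_succ (n : ℕ) : phIter K (n + 1) = (phIter K n) ^ 2 - C 2 := by
  rw [phIter, Function.iterate_succ_apply', ← phIter]
  simp [sub_comp, pow_comp]

lemma phIter_succ' (n : ℕ) :
    phIter K (n + 1) = (phIter K n).comp (X ^ 2 - C 2) := by
  induction n with
  | zero => simp [phIter_succ]
  | succ n ih =>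
      rw [phIter_succ (n + 1)]
      conv_rhs => rw [phIter_succ n]
      rw [ih, sub_comp, pow_comp, C_comp]

lemma phIter_monic (n : ℕ) : (phIter K n).Monic ∧ (phIter K n).natDegree = 2 ^ n := by
  induction n with
  | zero => simp [monic_X]
  | succ n ih =>
      obtain ⟨hm, hd⟩ := ih
      rw [phIter_succ]
      have hm2 : ((phIter K n) ^ 2).Monic := hm.pow _
      have hd2 : ((phIter K n) ^ 2).natDegree = 2 ^ (n + 1) := by
        rw [natDegree_pow, hd]; ring
      have hdeg : degree (C (2 : K)) < degree ((phIter K n) ^ 2) := by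
        have : (0 : ℕ) < 2 ^ (n + 1) := pow_pos (by norm_num) _
        calc degree (C (2 : K)) ≤ 0 := degree_C_le
          _ < ((2 ^ (n + 1) : ℕ) : WithBot ℕ) := by exact_mod_cast this
          _ = degree ((phIter K n) ^ 2) := by rw [degree_eq_natDegree hm2.ne_zero, hd2]
      exact ⟨hm2.sub_of_left hdeg, by rw [natDegree_sub_C, hd2]⟩

lemma phIter_map {L : Type*} [Field L] (f : K →+* L) (n : ℕ) :
    (phIter K n).map f = phIter L n := by
  induction n with
  | zero => simp
  | succ n ih =>
      rw [phIter_succ, phIter_succ, Polynomial.map_sub, Polynomial.map_pow, map_C, ih,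
        map_ofNat]

lemma phIter_eval_neg_two {n : ℕ} (hn : 1 ≤ n) : eval (-2 : K) (phIter K n) = 2 := by
  induction n, hn using Nat.le_induction with
  | base => simp [phIter_succ]; norm_num
  | succ n hn ih => simp [phIter_succ, ih]; norm_num

/-- the shifted polynomial -/
noncomputable def Qp (t : K) (n : ℕ) : K[X] := phIter K n - C t

lemma Qp_monic (t : K) (n : ℕ) : (Qp t n).Monic := by
  have h := phIter_monic (K := K) n
  have hdeg : degree (C t) < degree (phIter K n) := by
    have : (0 : ℕ) < 2 ^ n := pow_pos (by norm_num) _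
    calc degree (C t) ≤ 0 := degree_C_le
      _ < ((2 ^ n : ℕ) : WithBot ℕ) := by exact_mod_cast this
      _ = degree (phIter K n) := by rw [degree_eq_natDegree h.1.ne_zero, h.2]
  exact h.1.sub_of_left hdeg

lemma Qp_natDegree (t : K) (n : ℕ) : (Qp t n).natDegree = 2 ^ n := by
  rw [Qp, natDegree_sub_C, (phIter_monic n).2]

lemma Qp_succ (t : K) (n : ℕ) :
    Qp t (n + 1) = (Qp t n).comp (X ^ 2 - C 2) := by
  rw [Qp, Qp, phIter_succ', sub_comp, C_comp]

variable [IsAlgClosed K]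

lemma Qp_roots_card (t : K) (n : ℕ) : (Qp t n).roots.card = 2 ^ n := by
  rw [← Qp_natDegree t n]
  exact splits_iff_card_roots.mp (IsAlgClosed.splits _)

lemma Qp_eq_prod (t : K) (n : ℕ) :
    Qp t n = ((Qp t n).roots.map fun a => X - C a).prod :=
  (IsAlgClosed.splits _).eq_prod_roots_of_monic (Qp_monic t n)

lemma roots_quad (a c : K) (h : c ^ 2 = a) :
    (X ^ 2 - C a).roots = {c, -c} := by
  have hfact : (X ^ 2 - C a : K[X]) = (X - C c) * (X - C (-c)) := by
    rw [← h]; ring_nf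
    simp [C_pow]
    ring
  rw [hfact, roots_mul (by
        exact mul_ne_zero (X_sub_C_ne_zero c) (X_sub_C_ne_zero (-c))),
    roots_X_sub_C, roots_X_sub_C]
  rfl

/-- the product of derivative values over the roots -/
noncomputable def Tp (t : K) (n : ℕ) : K :=
  ((Qp t n).roots.map fun r => (derivative (Qp t n)).eval r).prod

lemma Tp_one (t : K) : Tp t 1 = -4 * (2 + t) := by
  have h1 : Qp t 1 = X ^ 2 - C (2 + t) := by
    rw [Qp, phIter_succ, phIter_zero, C_add]; ring
  obtain ⟨c, hc⟩ := IsAlgClosed.exists_pow_nat_eq (2 + t) (n := 2) (by norm_num)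
  have hroots : (Qp t 1).roots = {c, -c} := by rw [h1]; exact roots_quad _ _ hc
  have hderiv : derivative (Qp t 1) = C 2 * X := by
    rw [h1]; simp [derivative_X_pow]
    rw [← C_1, ← C_add]; norm_num
  rw [Tp, hroots, hderiv]
  simp [Multiset.prod_cons]
  rw [← hc]; ring

lemma Tp_rec (t : K) {n : ℕ} (hn : 1 ≤ n) :
    Tp t (n + 1) = 4 ^ 2 ^ n * (2 - t) * Tp t n ^ 2 := by
  set R := (Qp t n).roots with hR
  set e : K → K := fun r => (derivative (Qp t n)).eval r with he
  -- derivative of the next polynomial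
  have hderiv : derivative (Qp t (n + 1)) = (C 2 * X) * (derivative (Qp t n)).comp (X ^ 2 - C 2) := by
    rw [Qp_succ, derivative_comp]
    congr 1
    simp [derivative_X_pow]
    rw [← C_1, ← C_add]; norm_num
  -- factorization of the next polynomial
  have hfact : Qp t (n + 1) = (R.map fun r => X ^ 2 - C (2 + r)).prod := by
    rw [Qp_succ, Qp_eq_prod t n, multiset_prod_comp, ← hR, Multiset.map_map]
    congr 1
    apply Multiset.map_congr rfl
    intro r _
    simp only [Function.comp_apply, sub_comp, X_comp, C_comp, C_add]
    ring
  have hne : ∀ r : K, (X ^ 2 - C (2 + r) : K[X]) ≠ 0 := fun r =>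
    X_pow_sub_C_ne_zero (by norm_num) _
  have hroots : (Qp t (n + 1)).roots = R.bind fun r => (X ^ 2 - C (2 + r)).roots := by
    rw [hfact, roots_multiset_prod, Multiset.bind_map]
    intro h
    obtain ⟨r, _, hr⟩ := Multiset.mem_map.mp h
    exact hne r hr
  -- inner product over the two square roots
  have hinner : ∀ r : K,
      (((X ^ 2 - C (2 + r)).roots).map fun s => (derivative (Qp t (n + 1))).eval s).prod
        = -4 * (2 + r) * e r ^ 2 := by
    intro r
    obtain ⟨c, hc⟩ := IsAlgClosed.exists_pow_nat_eq (2 + r) (n := 2) (by norm_num)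
    rw [roots_quad _ _ hc, hderiv]
    have hgc : eval c (X ^ 2 - C (2 : K)) = r := by
      simp only [eval_sub, eval_pow, eval_X, eval_C, hc]; ring
    have hgc' : eval (-c) (X ^ 2 - C (2 : K)) = r := by
      simp only [eval_sub, eval_pow, eval_X, eval_C, neg_sq, hc]; ring
    simp only [Multiset.insert_eq_cons, Multiset.map_cons, Multiset.map_singleton,
      Multiset.prod_cons, Multiset.prod_singleton, eval_mul, eval_comp, eval_C, eval_X,
      hgc, hgc', ← he]
    rw [← hc]; ring
  calc Tp t (n + 1)
      = (R.map fun r => -4 * (2 + r) * e r ^ 2).prod := by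
        rw [Tp, hroots, Multiset.map_bind, Multiset.prod_bind]
        exact congrArg _ (Multiset.map_congr rfl fun r _ => hinner r)
    _ = (R.map fun _ => (-4 : K)).prod * (R.map fun r => 2 + r).prod
          * (R.map fun r => e r ^ 2).prod := by
        rw [Multiset.prod_map_mul, Multiset.prod_map_mul]
    _ = (-4) ^ 2 ^ n * (R.map fun r => 2 + r).prod * Tp t n ^ 2 := by
        rw [Multiset.map_const', Multiset.prod_replicate, hR, Qp_roots_card,
          Multiset.prod_map_pow, Tp]
    _ = 4 ^ 2 ^ n * (2 - t) * Tp t n ^ 2 := by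
        have hcard : R.card = 2 ^ n := by rw [hR]; exact Qp_roots_card t n
        have hprod : (R.map fun r => 2 + r).prod = (-1 : K) ^ 2 ^ n * eval (-2) (Qp t n) := by
          have h1 : eval (-2 : K) (Qp t n) = (R.map fun r => -2 - r).prod := by
            conv_lhs => rw [Qp_eq_prod t n]
            rw [eval_multiset_prod, ← hR, Multiset.map_map]
            exact congrArg _ (Multiset.map_congr rfl fun r _ => by simp)
          have h2 : (R.map fun r => 2 + r) = R.map fun r => (-1 : K) * (-2 - r) :=
            Multiset.map_congr rfl fun r _ => by ring
          rw [h1, h2, Multiset.prod_map_mul, Multiset.map_const', Multiset.prod_replicate,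
            hcard]
        have heval : eval (-2 : K) (Qp t n) = 2 - t := by
          rw [Qp, eval_sub, eval_C, phIter_eval_neg_two hn]
        have heven : Even (2 ^ n) := by
          rcases Nat.exists_eq_add_of_le hn with ⟨k, rfl⟩
          exact (Nat.even_pow).mpr ⟨even_two, by omega⟩
        rw [hprod, heval, heven.neg_pow, heven.neg_one_pow]
        ring

end Aux

/-- Let `φ(x) = x² − 2` and `t₀ ∈ ℤ`, and set
`D_n = disc(φ^∘n(x) − t₀)`.  Then `D₁ = 4(t₀ + 2)` and
`D_{n+1} = 4^{2^n} · D_n² · (2 − t₀)` for all `n ≥ 1`. -/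
theorem stmt_19 (t₀ : ℤ) (D : ℕ → AlgebraicClosure ℚ)
    (hD : ∀ n : ℕ, D n = polyDisc
      (((Polynomial.X ^ 2 - Polynomial.C (2 : ℚ)).comp)^[n] Polynomial.X
        - Polynomial.C (t₀ : ℚ))) :
    D 1 = algebraMap ℚ (AlgebraicClosure ℚ) (4 * ((t₀ : ℚ) + 2))
    ∧ ∀ n : ℕ, 1 ≤ n →
      D (n + 1)
        = (4 : AlgebraicClosure ℚ) ^ (2 ^ n) * (D n) ^ 2
          * algebraMap ℚ (AlgebraicClosure ℚ) (2 - (t₀ : ℚ)) := by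
  set t : AlgebraicClosure ℚ := algebraMap ℚ (AlgebraicClosure ℚ) (t₀ : ℚ) with ht
  -- identify the polynomial in hD with Qp
  have hQ : ∀ n : ℕ, (Qp (t₀ : ℚ) n : ℚ[X]) =
      ((Polynomial.X ^ 2 - Polynomial.C (2 : ℚ)).comp)^[n] Polynomial.X
        - Polynomial.C (t₀ : ℚ) := fun n => rfl
  have hmap : ∀ n : ℕ, (Qp (t₀ : ℚ) n).map (algebraMap ℚ (AlgebraicClosure ℚ)) = Qp t n := by
    intro n
    rw [Qp, Qp, Polynomial.map_sub, map_C, phIter_map]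
  have hdisc : ∀ n : ℕ, D n =
      (-1 : AlgebraicClosure ℚ) ^ ((2 ^ n) * (2 ^ n - 1) / 2) * Tp t n := by
    intro n
    rw [hD n, ← hQ n, polyDisc, hmap n, (Qp_monic (t₀ : ℚ) n).leadingCoeff,
      Qp_natDegree, map_one, one_zpow, mul_one, Tp]
  constructor
  · rw [hdisc 1, Tp_one, ht,
      show (2 ^ 1 * (2 ^ 1 - 1) / 2) = 1 from rfl, pow_one, map_mul, map_add,
      map_ofNat, map_ofNat, map_intCast]
    ring
  · intro n hn
    have heven : Even (2 ^ n) := by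
      rcases Nat.exists_eq_add_of_le hn with ⟨k, rfl⟩
      exact (Nat.even_pow).mpr ⟨even_two, by omega⟩
    have hev1 : Even (2 ^ (n + 1) * (2 ^ (n + 1) - 1) / 2) := by
      have h2 : 2 ^ (n + 1) * (2 ^ (n + 1) - 1) / 2 = 2 ^ n * (2 ^ (n + 1) - 1) := by
        rw [pow_succ, mul_comm (2 ^ n) 2, mul_assoc, Nat.mul_div_cancel_left _ (by norm_num)]
      rw [h2]
      exact heven.mul_right _
    rw [hdisc (n + 1), hdisc n, Tp_rec t hn, hev1.neg_one_pow, one_mul, mul_pow,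
      ← pow_mul]
    have : ((-1 : AlgebraicClosure ℚ) ^ (2 ^ n * (2 ^ n - 1) / 2 * 2)) = 1 := by
      rw [mul_comm, pow_mul]; norm_num
    rw [this, one_mul]
    have h2t : algebraMap ℚ (AlgebraicClosure ℚ) (2 - (t₀ : ℚ)) = 2 - t := by
      rw [map_sub, ht]; norm_num
    rw [h2t]
    ring
end
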